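/- arXiv:1809.01588 — 2 statements merged into one kernel-verified Lean document; each statement's English description precedes it below -/
import Mathlib

section
/- Let m ≤ d, let C_axis ∈ ℝ^{m×m×m} be the axis core tensor, and let X ∈ ℝ^{d×m} be a matrix of rank m. Then the only matrix Y ∈ ℝ^{d×m} satisfying [[C_axis; X, X, X]] = [[C_axis; Y, Y, Y]] is Y = X. In other words, a piecewise linear path in ℝ^d with at most d steps is uniquely recoverable from its third order signature tensor. -/
open Matrix

/-- The axis core tensor over `ℝ`. -/
noncomputable def caxis (m : ℕ) : Fin m → Fin m → Fin m → ℝ := fun i j k =>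
  if i < j ∧ j < k then 1
  else if (i < j ∧ j = k) ∨ (i = j ∧ j < k) then 1 / 2
  else if i = j ∧ j = k then 1 / 6
  else 0

/-- The congruence action of a `d × m` matrix on an `m × m × m` tensor. -/
def congrAct3 {m d : ℕ} (C : Fin m → Fin m → Fin m → ℝ)
    (X : Matrix (Fin d) (Fin m) ℝ) : Fin d → Fin d → Fin d → ℝ :=
  fun α β γ => ∑ i, ∑ j, ∑ k, C i j k * X α i * X β j * X γ k

open Finset


/-- Downward induction: a triangular system forces zero. -/
lemma descend_zero {n : ℕ} (t : Fin n → ℝ) (a b : ℝ) (ha : a ≠ 0)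
    (p : Fin n → Prop) (hp : ∀ {j k : Fin n}, j < k → p j → p k)
    (h : ∀ j, p j → a * t j + b * ∑ k ∈ Finset.Ioi j, t k = 0) :
    ∀ j, p j → t j = 0 := by
  have main : ∀ (N : ℕ) (j : Fin n), n - j.val ≤ N → p j → t j = 0 := by
    intro N
    induction N with
    | zero => intro j hj _; exact absurd hj (by have := j.isLt; omega)
    | succ N ih =>
      intro j hj hpj
      have hsum : ∑ k ∈ Finset.Ioi j, t k = 0 := by
        apply Finset.sum_eq_zero
        intro k hk
        have hlt : j < k := Finset.mem_Ioi.mp hk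
        exact ih k (by have := k.isLt; have := hlt; omega) (hp hlt hpj)
      have := h j hpj
      rw [hsum, mul_zero, add_zero] at this
      exact (mul_eq_zero.mp this).resolve_left ha
  intro j hj
  exact main n j (by omega) hj

lemma cube_eq_one {x : ℝ} (h : x ^ 3 = 1) : x = 1 := by
  have h1 : (x - 1) * (x ^ 2 + x + 1) = 0 := by ring_nf; nlinarith [h]
  have h2 : x ^ 2 + x + 1 > 0 := by nlinarith [sq_nonneg (2 * x + 1)]
  have := mul_eq_zero.mp h1
  rcases this with h3 | h3
  · linarith
  · linarith


lemma caxis_succ {m : ℕ} (i j k : Fin m) :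
    caxis (m + 1) i.succ j.succ k.succ = caxis m i j k := by
  simp only [caxis, Fin.succ_lt_succ_iff, Fin.succ_inj]

lemma caxis_of_lt₁ {m : ℕ} {i j : Fin m} (k : Fin m) (h : j < i) :
    caxis m i j k = 0 := by
  unfold caxis
  have h1 : ¬ i < j := by omega
  have h2 : ¬ i = j := by omega
  simp [h1, h2]

lemma caxis_of_lt₂ {m : ℕ} (i : Fin m) {j k : Fin m} (h : k < j) :
    caxis m i j k = 0 := by
  unfold caxis
  have h1 : ¬ j < k := by omega
  have h2 : ¬ j = k := by omega
  simp [h1, h2]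

lemma caxis_row0 {n : ℕ} {j : Fin (n + 1)} (k : Fin (n + 1)) (hj : j ≠ 0) :
    caxis (n + 1) 0 j k = if j < k then 1 else if j = k then 1 / 2 else 0 := by
  unfold caxis
  have h0 : (0 : Fin (n + 1)) < j := Fin.pos_iff_ne_zero.mpr hj
  have h1 : ¬ (0 : Fin (n + 1)) = j := ne_of_lt h0
  split_ifs <;> simp_all <;> omega

lemma caxis_diag {m : ℕ} (j k : Fin m) :
    caxis m j j k = if j < k then 1 / 2 else if j = k then 1 / 6 else 0 := by
  unfold caxis
  split_ifs <;> simp_all <;> omega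

lemma caxis_mid0 {n : ℕ} {i : Fin (n + 1)} (k : Fin (n + 1)) (hi : i ≠ 0) :
    caxis (n + 1) i 0 k = 0 :=
  caxis_of_lt₁ k (Fin.pos_iff_ne_zero.mpr hi)

lemma caxis_col0 {n : ℕ} (i j : Fin (n + 1)) :
    caxis (n + 1) i j 0 = if i = 0 ∧ j = 0 then 1 / 6 else 0 := by
  by_cases hi : i = 0 <;> by_cases hj : j = 0
  · subst hi; subst hj; simp [caxis]
  · subst hi
    rw [caxis_of_lt₂ _ (Fin.pos_iff_ne_zero.mpr hj)]
    simp [hj]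
  · subst hj
    rw [caxis_mid0 _ hi]
    simp [hi]
  · rw [caxis_of_lt₂ _ (Fin.pos_iff_ne_zero.mpr hj)]
    simp [hi]

lemma caxis_000 {n : ℕ} : caxis (n + 1) 0 0 0 = 1 / 6 := by
  simp [caxis_col0]

lemma sum_tri {m : ℕ} (u : Fin m → ℝ) (j : Fin m) (A B : ℝ) :
    ∑ k, (if j < k then A else if j = k then B else 0) * u k
      = B * u j + A * ∑ k ∈ Finset.Ioi j, u k := by
  have key : ∀ k, (if j < k then A else if j = k then B else 0) * u k
      = (if k ∈ Finset.Ioi j then A * u k else 0) + (if k = j then B * u k else 0) := by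
    intro k
    by_cases h1 : j < k
    · have h2 : ¬ k = j := by omega
      simp [h1, h2, Finset.mem_Ioi]
    · by_cases h2 : j = k
      · simp [h1, h2.symm, Finset.mem_Ioi, h2 ▸ h1]
      · have h2' : ¬ k = j := fun e => h2 e.symm
        simp [h1, h2, h2', Finset.mem_Ioi]
  rw [Finset.sum_congr rfl (fun k _ => key k), Finset.sum_add_distrib]
  rw [Finset.sum_ite_mem, Finset.univ_inter, Finset.sum_ite_eq']
  simp [Finset.mul_sum, add_comm]

/-- Cancellation of a full-column-rank matrix, vector version. -/
lemma mulVec_cancel {d m : ℕ} {X : Matrix (Fin d) (Fin m) ℝ}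
    (hinj : Function.Injective X.mulVecLin) {g : Fin m → ℝ}
    (h : ∀ α, ∑ i, X α i * g i = 0) : g = 0 := by
  have : X.mulVecLin g = X.mulVecLin 0 := by
    rw [map_zero]
    ext α
    rw [mulVecLin_apply, mulVec, dotProduct]
    simpa [mul_comm] using h α
  exact hinj this

lemma cancel2 {d m : ℕ} {X : Matrix (Fin d) (Fin m) ℝ}
    (hinj : Function.Injective X.mulVecLin) {D : Fin m → Fin m → ℝ}
    (h : ∀ α β, ∑ i, ∑ j, D i j * X α i * X β j = 0) : ∀ i j, D i j = 0 := by
  have step1 : ∀ β i, ∑ j, D i j * X β j = 0 := by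
    intro β i
    have := mulVec_cancel hinj (g := fun i => ∑ j, D i j * X β j) (fun α => ?_)
    · exact congrFun this i
    · rw [← h α β]
      apply Finset.sum_congr rfl
      intro i _
      rw [Finset.mul_sum]
      exact Finset.sum_congr rfl (fun j _ => by ring)
  intro i j
  have := mulVec_cancel hinj (g := fun j => D i j) (fun β => ?_)
  · exact congrFun this j
  · rw [← step1 β i]
    apply Finset.sum_congr rfl
    intro j _
    ring

lemma cancel3 {d m : ℕ} {X : Matrix (Fin d) (Fin m) ℝ}
    (hinj : Function.Injective X.mulVecLin) {D : Fin m → Fin m → Fin m → ℝ}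
    (h : ∀ α β γ, ∑ i, ∑ j, ∑ k, D i j k * X α i * X β j * X γ k = 0) :
    ∀ i j k, D i j k = 0 := by
  have step1 : ∀ β γ i, ∑ j, ∑ k, D i j k * X β j * X γ k = 0 := by
    intro β γ i
    have := mulVec_cancel hinj (g := fun i => ∑ j, ∑ k, D i j k * X β j * X γ k)
      (fun α => ?_)
    · exact congrFun this i
    · rw [← h α β γ]
      apply Finset.sum_congr rfl
      intro i _
      rw [Finset.mul_sum]
      apply Finset.sum_congr rfl
      intro j _
      rw [Finset.mul_sum]
      exact Finset.sum_congr rfl (fun k _ => by ring)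
  intro i j k
  exact cancel2 hinj (D := fun j k => D i j k) (fun β γ => step1 β γ i) j k

theorem stab : ∀ (m : ℕ) (W : Matrix (Fin m) (Fin m) ℝ), W.det ≠ 0 →
    (∀ α β γ, ∑ i, ∑ j, ∑ k,
        caxis m i j k * W α i * W β j * W γ k = caxis m α β γ) →
    W = 1 := by
  intro m
  induction m with
  | zero =>
    intro W _ _
    ext i j
    exact i.elim0
  | succ m ih =>
    intro W hdet hc
    have huW : IsUnit W.det := isUnit_iff_ne_zero.mpr hdet
    have huWT : IsUnit Wᵀ.det := by rw [Matrix.det_transpose]; exact huW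
    -- the matrix M = contraction of the core with row 0 of W in the third slot
    set M : Matrix (Fin (m + 1)) (Fin (m + 1)) ℝ :=
      Matrix.of (fun i j => ∑ k, caxis (m + 1) i j k * W 0 k) with hMdef
    have expand : ∀ (α β : Fin (m + 1)), (W * M * Wᵀ) α β
        = ∑ i, ∑ j, ∑ k, caxis (m + 1) i j k * W α i * W β j * W 0 k := by
      intro α β
      calc (W * M * Wᵀ) α β
          = ∑ j, ∑ i, ∑ k, caxis (m + 1) i j k * W α i * W β j * W 0 k := by
            rw [Matrix.mul_apply]
            apply Finset.sum_congr rfl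
            intro j _
            rw [Matrix.transpose_apply, Matrix.mul_apply, Finset.sum_mul]
            apply Finset.sum_congr rfl
            intro i _
            simp only [hMdef, Matrix.of_apply]
            rw [Finset.mul_sum, Finset.sum_mul]
            apply Finset.sum_congr rfl
            intro k _
            ring
        _ = ∑ i, ∑ j, ∑ k, caxis (m + 1) i j k * W α i * W β j * W 0 k :=
            Finset.sum_comm
    have hWMW : W * M * Wᵀ
        = Matrix.of (fun α β : Fin (m + 1) => caxis (m + 1) α β 0) := by
      ext α β
      rw [expand α β, Matrix.of_apply, ← hc α β 0]
    -- cancellation of congruence by W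
    have hcan : ∀ A B : Matrix (Fin (m + 1)) (Fin (m + 1)) ℝ,
        W * A * Wᵀ = W * B * Wᵀ → A = B := by
      intro A B hAB
      have key : ∀ C : Matrix (Fin (m + 1)) (Fin (m + 1)) ℝ,
          W⁻¹ * (W * C * Wᵀ) * Wᵀ⁻¹ = C := by
        intro C
        rw [Matrix.mul_assoc W⁻¹, Matrix.mul_assoc (W * C),
          Matrix.mul_nonsing_inv _ huWT, Matrix.mul_one, ← Matrix.mul_assoc,
          Matrix.nonsing_inv_mul _ huW, Matrix.one_mul]
      rw [← key A, ← key B, hAB]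
    -- M is symmetric
    have hMsymm : M = Mᵀ := by
      apply hcan
      have h1 : (W * M * Wᵀ)ᵀ = W * Mᵀ * Wᵀ := by
        rw [Matrix.transpose_mul, Matrix.transpose_mul, Matrix.transpose_transpose,
          Matrix.mul_assoc]
      rw [← h1, hWMW]
      ext α β
      simp only [Matrix.transpose_apply, Matrix.of_apply, caxis_col0]
      by_cases hα : α = 0 <;> by_cases hβ : β = 0 <;> simp [hα, hβ]
    -- row 0 of W vanishes off the diagonal
    have hrow0 : ∀ j : Fin (m + 1), j ≠ 0 → W 0 j = 0 := by
      have hM0 : ∀ j : Fin (m + 1), j ≠ 0 →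
          (1 / 2 : ℝ) * W 0 j + 1 * ∑ k ∈ Finset.Ioi j, W 0 k = 0 := by
        intro j hj
        have e1 : M 0 j = (1 / 2 : ℝ) * W 0 j + 1 * ∑ k ∈ Finset.Ioi j, W 0 k := by
          simp only [hMdef, Matrix.of_apply]
          rw [← sum_tri (fun k => W 0 k) j 1 (1 / 2)]
          apply Finset.sum_congr rfl
          intro k _
          rw [caxis_row0 k hj]
        have e2 : M j 0 = 0 := by
          simp only [hMdef, Matrix.of_apply]
          apply Finset.sum_eq_zero
          intro k _
          rw [caxis_mid0 k hj, zero_mul]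
        rw [← e1]
        calc M 0 j = Mᵀ 0 j := by rw [← hMsymm]
          _ = M j 0 := rfl
          _ = 0 := e2
      exact descend_zero (fun k => W 0 k) (1 / 2) 1 (by norm_num) (fun j => j ≠ 0)
        (fun {j k} hjk _ => fun hk => by
          subst hk
          exact absurd hjk (Fin.not_lt_zero j)) hM0
    -- the (0,0) entry is 1
    have h00 : W 0 0 = 1 := by
      have h000 := hc 0 0 0
      rw [caxis_000] at h000
      have hred : ∑ i, ∑ j, ∑ k,
          caxis (m + 1) i j k * W 0 i * W 0 j * W 0 k
          = 1 / 6 * (W 0 0) ^ 3 := by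
        rw [Finset.sum_eq_single 0]
        · rw [Finset.sum_eq_single 0]
          · rw [Finset.sum_eq_single 0]
            · rw [caxis_000]; ring
            · intro k _ hk
              rw [hrow0 k hk]; ring
            · intro h; exact absurd (Finset.mem_univ _) h
          · intro j _ hj
            apply Finset.sum_eq_zero
            intro k _
            rw [hrow0 j hj]; ring
          · intro h; exact absurd (Finset.mem_univ _) h
        · intro i _ hi
          apply Finset.sum_eq_zero; intro j _
          apply Finset.sum_eq_zero; intro k _
          rw [hrow0 i hi]; ring
        · intro h; exact absurd (Finset.mem_univ _) h
      rw [hred] at h000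
      have : (W 0 0) ^ 3 = 1 := by linarith
      exact cube_eq_one this
    have hrow : ∀ j : Fin (m + 1), W 0 j = if j = 0 then 1 else 0 := by
      intro j
      by_cases hj : j = 0
      · subst hj; simp [h00]
      · simp [hj, hrow0 j hj]
    -- column 0 of W
    have hcol : ∀ β : Fin (m + 1), W β 0 = if β = 0 then 1 else 0 := by
      intro β
      have hβ0 := hc 0 β 0
      rw [caxis_col0] at hβ0
      have hred : ∑ i, ∑ j, ∑ k,
          caxis (m + 1) i j k * W 0 i * W β j * W 0 k
          = 1 / 6 * W β 0 := by
        rw [Finset.sum_eq_single 0]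
        · calc ∑ j, ∑ k, caxis (m + 1) 0 j k * W 0 0 * W β j * W 0 k
              = ∑ j, caxis (m + 1) 0 j 0 * W β j := by
                apply Finset.sum_congr rfl
                intro j _
                rw [Finset.sum_eq_single 0]
                · rw [h00]; ring
                · intro k _ hk; rw [hrow0 k hk]; ring
                · intro h; exact absurd (Finset.mem_univ _) h
            _ = 1 / 6 * W β 0 := by
                rw [Finset.sum_eq_single 0]
                · rw [caxis_000]
                · intro j _ hj
                  rw [caxis_col0]
                  simp [hj]
                · intro h; exact absurd (Finset.mem_univ _) h
        · intro i _ hi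
          apply Finset.sum_eq_zero; intro j _
          apply Finset.sum_eq_zero; intro k _
          rw [hrow0 i hi]; ring
        · intro h; exact absurd (Finset.mem_univ _) h
      rw [hred] at hβ0
      by_cases hβ : β = 0
      · subst hβ; simp [h00]
      · rw [if_neg (by simp [hβ])] at hβ0
        rw [if_neg hβ]
        linarith
    -- pass to the submatrix
    set W' : Matrix (Fin m) (Fin m) ℝ := W.submatrix Fin.succ Fin.succ with hW'def
    have hW0succ : ∀ a : Fin m, W a.succ 0 = 0 := by
      intro a
      rw [hcol]
      simp [Fin.succ_ne_zero]
    have hW0succ' : ∀ b : Fin m, W 0 b.succ = 0 := by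
      intro b
      rw [hrow]
      simp [Fin.succ_ne_zero]
    have hdet' : W'.det ≠ 0 := by
      have hdW : W.det = W'.det := by
        rw [Matrix.det_succ_row_zero, Finset.sum_eq_single 0]
        · rw [hrow 0]
          simp [Fin.succAbove_zero, hW'def]
        · intro j _ hj
          rw [hrow j]
          simp [hj]
        · intro h; exact absurd (Finset.mem_univ _) h
      rw [← hdW]; exact hdet
    have hc' : ∀ α β γ : Fin m, ∑ i, ∑ j, ∑ k,
        caxis m i j k * W' α i * W' β j * W' γ k = caxis m α β γ := by
      intro α β γ
      have := hc α.succ β.succ γ.succ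
      rw [← caxis_succ α β γ, ← this]
      rw [Fin.sum_univ_succ]
      have hz1 : ∑ j, ∑ k, caxis (m + 1) 0 j k * W α.succ 0 * W β.succ j
          * W γ.succ k = 0 := by
        apply Finset.sum_eq_zero; intro j _
        apply Finset.sum_eq_zero; intro k _
        rw [hW0succ α]; ring
      rw [hz1, zero_add]
      apply Finset.sum_congr rfl
      intro i _
      rw [Fin.sum_univ_succ]
      have hz2 : ∑ k, caxis (m + 1) i.succ 0 k * W α.succ i.succ * W β.succ 0
          * W γ.succ k = 0 := by
        apply Finset.sum_eq_zero; intro k _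
        rw [hW0succ β]; ring
      rw [hz2, zero_add]
      apply Finset.sum_congr rfl
      intro j _
      rw [Fin.sum_univ_succ]
      have hz3 : caxis (m + 1) i.succ j.succ 0 * W α.succ i.succ * W β.succ j.succ
          * W γ.succ 0 = 0 := by
        rw [hW0succ γ]; ring
      rw [hz3, zero_add]
      apply Finset.sum_congr rfl
      intro k _
      rw [caxis_succ]
      simp [hW'def]
    have hW'1 : W' = 1 := ih W' hdet' hc'
    -- conclude
    ext i j
    refine Fin.cases ?_ ?_ i
    · refine Fin.cases ?_ ?_ j
      · rw [h00]; simp [Matrix.one_apply]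
      · intro b
        rw [hW0succ' b]
        simp [Matrix.one_apply, (Fin.succ_ne_zero b).symm]
    · intro a
      refine Fin.cases ?_ ?_ j
      · rw [hW0succ a]
        simp [Matrix.one_apply, Fin.succ_ne_zero a]
      · intro b
        have : W' a b = (1 : Matrix (Fin m) (Fin m) ℝ) a b := by rw [hW'1]
        rw [hW'def] at this
        simp only [Matrix.submatrix_apply] at this
        rw [this]
        simp [Matrix.one_apply, Fin.succ_inj]


lemma sum_rot3 {a b : Type*} [Fintype a] [Fintype b] (F : a → a → b → ℝ) :
    ∑ i, ∑ j, ∑ k, F i j k = ∑ k, ∑ i, ∑ j, F i j k := by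
  calc ∑ i, ∑ j, ∑ k, F i j k
      = ∑ i, ∑ k, ∑ j, F i j k := Finset.sum_congr rfl fun i _ => Finset.sum_comm
    _ = ∑ k, ∑ i, ∑ j, F i j k := Finset.sum_comm


lemma helper1 {a b : Type*} [Fintype a] [Fintype b]
    (F : a → a → a → b → ℝ) :
    ∑ i, ∑ j, ∑ k, ∑ p, F i j k p = ∑ p, ∑ i, ∑ j, ∑ k, F i j k p := by
  calc ∑ i, ∑ j, ∑ k, ∑ p, F i j k p
      = ∑ i, ∑ j, ∑ p, ∑ k, F i j k p :=
        Finset.sum_congr rfl fun i _ => Finset.sum_congr rfl fun j _ => Finset.sum_comm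
    _ = ∑ i, ∑ p, ∑ j, ∑ k, F i j k p :=
        Finset.sum_congr rfl fun i _ => Finset.sum_comm
    _ = ∑ p, ∑ i, ∑ j, ∑ k, F i j k p := Finset.sum_comm

lemma sum_swap6 {a b : Type*} [Fintype a] [Fintype b]
    (f : a → a → a → b → b → b → ℝ) :
    ∑ i, ∑ j, ∑ k, ∑ p, ∑ q, ∑ r, f i j k p q r
      = ∑ p, ∑ q, ∑ r, ∑ i, ∑ j, ∑ k, f i j k p q r := by
  rw [helper1 (fun i j k p => ∑ q, ∑ r, f i j k p q r)]
  apply Finset.sum_congr rfl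
  intro p _
  rw [helper1 (fun i j k q => ∑ r, f i j k p q r)]
  apply Finset.sum_congr rfl
  intro q _
  rw [helper1 (fun i j k r => f i j k p q r)]

lemma sum_swap13 {b : Type*} [Fintype b] (g : b → b → b → ℝ) :
    ∑ p, ∑ q, ∑ r, g p q r = ∑ r, ∑ q, ∑ p, g p q r := by
  calc ∑ p, ∑ q, ∑ r, g p q r
      = ∑ p, ∑ r, ∑ q, g p q r := Finset.sum_congr rfl fun p _ => Finset.sum_comm
    _ = ∑ r, ∑ p, ∑ q, g p q r := Finset.sum_comm
    _ = ∑ r, ∑ q, ∑ p, g p q r := Finset.sum_congr rfl fun r _ => Finset.sum_comm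

lemma hpush {m d : ℕ} (C : Fin m → Fin m → Fin m → ℝ)
    (X : Matrix (Fin d) (Fin m) ℝ) (W : Matrix (Fin m) (Fin m) ℝ) :
    congrAct3 C (X * W) = congrAct3 (congrAct3 C W) X := by
  funext α β γ
  show ∑ i, ∑ j, ∑ k, C i j k * (X * W) α i * (X * W) β j * (X * W) γ k
    = ∑ p, ∑ q, ∑ r, (∑ i, ∑ j, ∑ k, C i j k * W p i * W q j * W r k)
        * X α p * X β q * X γ r
  have lhs_eq : ∀ i j k, C i j k * (X * W) α i * (X * W) β j * (X * W) γ k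
      = ∑ p, ∑ q, ∑ r, C i j k * (X α p * W p i) * (X β q * W q j)
          * (X γ r * W r k) := by
    intro i j k
    simp only [Matrix.mul_apply, Finset.mul_sum, Finset.sum_mul]
    rw [sum_swap13 (fun p q r => C i j k * (X α p * W p i) * (X β q * W q j)
      * (X γ r * W r k))]
  calc ∑ i, ∑ j, ∑ k, C i j k * (X * W) α i * (X * W) β j * (X * W) γ k
      = ∑ i, ∑ j, ∑ k, ∑ p, ∑ q, ∑ r, C i j k * (X α p * W p i)
          * (X β q * W q j) * (X γ r * W r k) := by
        apply Finset.sum_congr rfl; intro i _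
        apply Finset.sum_congr rfl; intro j _
        apply Finset.sum_congr rfl; intro k _
        exact lhs_eq i j k
    _ = ∑ p, ∑ q, ∑ r, ∑ i, ∑ j, ∑ k, C i j k * (X α p * W p i)
          * (X β q * W q j) * (X γ r * W r k) := sum_swap6 _
    _ = ∑ p, ∑ q, ∑ r, (∑ i, ∑ j, ∑ k, C i j k * W p i * W q j * W r k)
          * X α p * X β q * X γ r := by
        apply Finset.sum_congr rfl; intro p _
        apply Finset.sum_congr rfl; intro q _
        apply Finset.sum_congr rfl; intro r _
        simp only [Finset.sum_mul]
        apply Finset.sum_congr rfl; intro i _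
        apply Finset.sum_congr rfl; intro j _
        apply Finset.sum_congr rfl; intro k _
        ring

/-- Piecewise linear paths with at most `d` steps in `ℝ^d` are uniquely
recoverable from their third order signature tensor: for `m ≤ d` and a rank-`m`
matrix `X ∈ ℝ^{d×m}`, the only `Y ∈ ℝ^{d×m}` with the same signature tensor
relative to the axis core tensor is `Y = X`. -/
theorem piecewise_linear_identifiable (m d : ℕ) (hmd : m ≤ d)
    (X : Matrix (Fin d) (Fin m) ℝ) (hX : X.rank = m)
    (Y : Matrix (Fin d) (Fin m) ℝ)
    (hY : congrAct3 (caxis m) X = congrAct3 (caxis m) Y) :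
    Y = X := by
  have hfr : Module.finrank ℝ (Fin m → ℝ) = m := by simp
  -- X has full column rank, so mulVec by X is injective
  have hXr : Module.finrank ℝ (LinearMap.range X.mulVecLin) = m := hX
  have hXinj : Function.Injective X.mulVecLin := by
    apply LinearMap.ker_eq_bot.mp
    have h1 := LinearMap.finrank_range_add_finrank_ker X.mulVecLin
    rw [hfr, hXr] at h1
    exact Submodule.finrank_eq_zero.mp (by omega)
  -- the slice coefficient vectors
  set uX : Fin d → Fin d → (Fin m → ℝ) :=
    fun α β k => ∑ i, ∑ j, caxis m i j k * X α i * X β j with huX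
  set uY : Fin d → Fin d → (Fin m → ℝ) :=
    fun α β k => ∑ i, ∑ j, caxis m i j k * Y α i * Y β j with huY
  have slice_eq : ∀ (Z : Matrix (Fin d) (Fin m) ℝ) (α β γ : Fin d),
      ∑ k, Z γ k * (∑ i, ∑ j, caxis m i j k * Z α i * Z β j)
        = congrAct3 (caxis m) Z α β γ := by
    intro Z α β γ
    show _ = ∑ i, ∑ j, ∑ k, caxis m i j k * Z α i * Z β j * Z γ k
    calc ∑ k, Z γ k * (∑ i, ∑ j, caxis m i j k * Z α i * Z β j)
        = ∑ k, ∑ i, ∑ j, caxis m i j k * Z α i * Z β j * Z γ k := by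
          apply Finset.sum_congr rfl; intro k _
          rw [Finset.mul_sum]
          apply Finset.sum_congr rfl; intro i _
          rw [Finset.mul_sum]
          apply Finset.sum_congr rfl; intro j _
          ring
      _ = ∑ i, ∑ j, ∑ k, caxis m i j k * Z α i * Z β j * Z γ k :=
          (sum_rot3 (fun i j k => caxis m i j k * Z α i * Z β j * Z γ k)).symm
  have hslice : ∀ α β : Fin d, X.mulVec (uX α β) = Y.mulVec (uY α β) := by
    intro α β
    funext γ
    show ∑ k, X γ k * uX α β k = ∑ k, Y γ k * uY α β k
    rw [slice_eq X α β γ, slice_eq Y α β γ, hY]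
  -- the matrix of slice coefficients has full column rank
  set U : Matrix (Fin d × Fin d) (Fin m) ℝ :=
    Matrix.of (fun p k => uX p.1 p.2 k) with hUdef
  have hUzero : ∀ t : Fin m → ℝ, U.mulVec t = 0 → t = 0 := by
    intro t ht
    have h1 : ∀ α β : Fin d,
        ∑ i, ∑ j, (∑ k, caxis m i j k * t k) * X α i * X β j = 0 := by
      intro α β
      have h2 : (U.mulVec t) (α, β) = 0 := by rw [ht]; rfl
      rw [← h2]
      show ∑ i, ∑ j, (∑ k, caxis m i j k * t k) * X α i * X β j
        = ∑ k, U (α, β) k * t k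
      simp only [hUdef, Matrix.of_apply, huX]
      calc ∑ i, ∑ j, (∑ k, caxis m i j k * t k) * X α i * X β j
          = ∑ i, ∑ j, ∑ k, (caxis m i j k * X α i * X β j) * t k := by
            apply Finset.sum_congr rfl; intro i _
            apply Finset.sum_congr rfl; intro j _
            rw [Finset.sum_mul, Finset.sum_mul]
            apply Finset.sum_congr rfl; intro k _
            ring
        _ = ∑ k, ∑ i, ∑ j, (caxis m i j k * X α i * X β j) * t k :=
            sum_rot3 (fun i j k => (caxis m i j k * X α i * X β j) * t k)
        _ = ∑ k, (∑ i, ∑ j, caxis m i j k * X α i * X β j) * t k := by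
            apply Finset.sum_congr rfl; intro k _
            rw [Finset.sum_mul]
            apply Finset.sum_congr rfl; intro i _
            rw [Finset.sum_mul]
    have h3 := cancel2 hXinj h1
    have h4 : ∀ j : Fin m,
        (1 / 6 : ℝ) * t j + 1 / 2 * ∑ k ∈ Finset.Ioi j, t k = 0 := by
      intro j
      have h6 : ∑ k, (if j < k then (1 / 2 : ℝ) else if j = k then 1 / 6 else 0)
          * t k = 0 := by
        calc ∑ k, (if j < k then (1 / 2 : ℝ) else if j = k then 1 / 6 else 0) * t k
            = ∑ k, caxis m j j k * t k :=
              Finset.sum_congr rfl (fun k _ => by rw [caxis_diag])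
          _ = 0 := h3 j j
      rw [sum_tri t j (1 / 2) (1 / 6)] at h6
      exact h6
    funext j
    exact descend_zero t (1 / 6) (1 / 2) (by norm_num) (fun _ => True)
      (fun _ _ => trivial) (fun j _ => h4 j) j trivial
  have hUinj : Function.Injective U.mulVecLin :=
    LinearMap.ker_eq_bot.mp (LinearMap.ker_eq_bot'.mpr
      (fun t ht => hUzero t (by rw [← Matrix.mulVecLin_apply]; exact ht)))
  have hUrank : Module.finrank ℝ (LinearMap.range U.mulVecLin) = m := by
    rw [LinearMap.finrank_range_of_inj hUinj, hfr]
  have hspanU : Submodule.span ℝ (Set.range U) = ⊤ := by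
    apply Submodule.eq_top_of_finrank_eq
    have h1 : LinearMap.range Uᵀ.mulVecLin = Submodule.span ℝ (Set.range Uᵀᵀ) :=
      Matrix.range_mulVecLin Uᵀ
    rw [Matrix.transpose_transpose] at h1
    have h2 : Uᵀ.rank = m := by rw [Matrix.rank_transpose]; exact hUrank
    have h3 : Module.finrank ℝ (LinearMap.range Uᵀ.mulVecLin) = m := h2
    rw [h1] at h3
    rw [h3, hfr]
  have hXrange_le : LinearMap.range X.mulVecLin ≤ LinearMap.range Y.mulVecLin := by
    rw [← Submodule.map_top X.mulVecLin, ← hspanU, Submodule.map_span]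
    apply Submodule.span_le.mpr
    rintro x ⟨y, ⟨p, rfl⟩, rfl⟩
    refine ⟨uY p.1 p.2, ?_⟩
    rw [Matrix.mulVecLin_apply, Matrix.mulVecLin_apply, ← hslice p.1 p.2]
    rfl
  have hrange_eq : LinearMap.range X.mulVecLin = LinearMap.range Y.mulVecLin :=
    Submodule.eq_of_le_of_finrank_le hXrange_le
      (by rw [hXr]; exact le_trans (LinearMap.finrank_range_le _) (le_of_eq hfr))
  have hYr : Module.finrank ℝ (LinearMap.range Y.mulVecLin) = m := by
    rw [← hrange_eq]; exact hXr
  have hYinj : Function.Injective Y.mulVecLin := by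
    apply LinearMap.ker_eq_bot.mp
    have h1 := LinearMap.finrank_range_add_finrank_ker Y.mulVecLin
    rw [hfr, hYr] at h1
    exact Submodule.finrank_eq_zero.mp (by omega)
  -- columns of Y lie in the column span of X
  have hcolY : ∀ j : Fin m, ∃ v : Fin m → ℝ, X.mulVec v = fun α => Y α j := by
    intro j
    have h1 : (fun α => Y α j) ∈ LinearMap.range Y.mulVecLin := by
      refine ⟨Pi.single j 1, ?_⟩
      funext α
      rw [Matrix.mulVecLin_apply, Matrix.mulVec_single]
      exact mul_one (Y α j)
    rw [← hrange_eq] at h1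
    obtain ⟨v, hv⟩ := h1
    exact ⟨v, by rw [← Matrix.mulVecLin_apply]; exact hv⟩
  choose w hw using hcolY
  set W : Matrix (Fin m) (Fin m) ℝ := Matrix.of (fun i j => w j i) with hWdef
  have hYXW : Y = X * W := by
    ext α j
    rw [Matrix.mul_apply]
    calc Y α j = X.mulVec (w j) α := (congrFun (hw j) α).symm
      _ = ∑ i, X α i * W i j := rfl
  have hWzero : ∀ t, W.mulVec t = 0 → t = 0 := by
    intro t ht
    have hYt : Y.mulVec t = 0 := by
      rw [hYXW, ← Matrix.mulVec_mulVec, ht, Matrix.mulVec_zero]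
    have : Y.mulVecLin t = Y.mulVecLin 0 := by
      rw [map_zero, Matrix.mulVecLin_apply]; exact hYt
    exact hYinj this
  have hdetW : W.det ≠ 0 := by
    intro h0
    obtain ⟨v, hv0, hv⟩ := Matrix.exists_mulVec_eq_zero_iff.mpr h0
    exact hv0 (hWzero v hv)
  -- W stabilizes the core tensor
  have hCXW : congrAct3 (caxis m) X = congrAct3 (congrAct3 (caxis m) W) X := by
    rw [hY, hYXW, hpush]
  have hzero : ∀ α β γ : Fin d, ∑ i, ∑ j, ∑ k,
      (congrAct3 (caxis m) W i j k - caxis m i j k) * X α i * X β j * X γ k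
        = 0 := by
    intro α β γ
    have heq := congrFun (congrFun (congrFun hCXW α) β) γ
    have hexp : ∑ i, ∑ j, ∑ k,
        (congrAct3 (caxis m) W i j k - caxis m i j k) * X α i * X β j * X γ k
        = congrAct3 (congrAct3 (caxis m) W) X α β γ
          - congrAct3 (caxis m) X α β γ := by
      show _ = (∑ i, ∑ j, ∑ k, congrAct3 (caxis m) W i j k * X α i * X β j * X γ k)
        - ∑ i, ∑ j, ∑ k, caxis m i j k * X α i * X β j * X γ k
      rw [← Finset.sum_sub_distrib]
      apply Finset.sum_congr rfl; intro i _
      rw [← Finset.sum_sub_distrib]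
      apply Finset.sum_congr rfl; intro j _
      rw [← Finset.sum_sub_distrib]
      apply Finset.sum_congr rfl; intro k _
      ring
    rw [hexp, ← heq, sub_self]
  have hstabcond : ∀ α β γ : Fin m, ∑ i, ∑ j, ∑ k,
      caxis m i j k * W α i * W β j * W γ k = caxis m α β γ := by
    intro α β γ
    have h1 : congrAct3 (caxis m) W α β γ - caxis m α β γ = 0 :=
      cancel3 hXinj hzero α β γ
    have h2 : congrAct3 (caxis m) W α β γ = caxis m α β γ := by linarith
    exact h2
  have hW1 : W = 1 := stab m W hdetW hstabcond
  rw [hYXW, hW1, Matrix.mul_one]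
end

section
/- Let C ∈ ℝ^{m×m×m} have trivial real stabilizer, meaning every invertible Z ∈ ℝ^{m×m} with [[C; Z, Z, Z]] = C equals the identity. Let X ∈ ℝ^{d×m} have rank m, and let X⁺ = (XᵀX)⁻¹Xᵀ denote its pseudo-inverse. Suppose S ∈ ℝ^{d×d×d} is a non-identifiable signature tensor, i.e. there exist two distinct matrices Y₁ ≠ Y₂ in ℝ^{d×m} with [[C; Y₁, Y₁, Y₁]] = [[C; Y₂, Y₂, Y₂]] = S. Then for each i ∈ {1,2,3} there exists a matrix A ∈ ℝ^{m×m²} of rank strictly less than m such that ‖C⁽ⁱ⁾ − A‖_F ≤ ‖X⁺‖_F³ · ‖[[C; X, X, X]] − S‖_F. -/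
open Matrix

/-- Frobenius norm of a matrix. -/
noncomputable def frobM {a b : Type*} [Fintype a] [Fintype b] (M : Matrix a b ℝ) : ℝ :=
  Real.sqrt (∑ i, ∑ j, M i j ^ 2)

/-- Frobenius norm of an order three tensor. -/
noncomputable def frobT {d : ℕ} (T : Fin d → Fin d → Fin d → ℝ) : ℝ :=
  Real.sqrt (∑ i, ∑ j, ∑ k, T i j k ^ 2)

/-!
Write `X⁺ = (XᵀX)⁻¹Xᵀ`, so that `X⁺X = 1`. The first flattening of `[[T; P, P, P]]` is
`P T⁽¹⁾ (P ⊗ P)ᵀ`; hence its rank is at most `rank P`, and its Frobenius norm is at most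
`‖P‖³ ‖T‖`. For `Y ∈ {Y₁, Y₂}` we have `C - [[C; X⁺Y]] = [[[[C; X]] - S; X⁺]]`, so the
flattening of `[[C; X⁺Y]]` is close enough to `C⁽¹⁾`, and has rank `< m` as soon as `rank Y < m`.
If instead `Y₁, Y₂` and `C⁽¹⁾` all have full rank, then `S⁽¹⁾ = Yᵢ Gᵢ` with
`Gᵢ = C⁽¹⁾ (Yᵢ ⊗ Yᵢ)ᵀ` of full row rank, which yields an invertible `Z` with `Y₁ Z = Y₂` and
`[[C; Z]] = C`; the trivial stabilizer then forces `Y₁ = Y₂`. The other two flattenings of `C`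
are first flattenings of tensors obtained by permuting the modes of `C`.
-/

open scoped Kronecker

section Frobenius

open scoped Matrix.Norms.Frobenius

variable {a b c e : Type*} [Fintype a] [Fintype b] [Fintype c] [Fintype e]

lemma frobM_eq_norm (M : Matrix a b ℝ) : frobM M = ‖M‖ := by
  simp only [frobM, frobenius_norm_def, Real.norm_eq_abs, Real.rpow_two, sq_abs,
    Real.sqrt_eq_rpow]

lemma frobM_nonneg (M : Matrix a b ℝ) : 0 ≤ frobM M := Real.sqrt_nonneg _

lemma frobM_zero : frobM (0 : Matrix a b ℝ) = 0 := by simp [frobM]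

lemma frobM_mul_le (A : Matrix a b ℝ) (B : Matrix b c ℝ) :
    frobM (A * B) ≤ frobM A * frobM B := by
  simpa only [frobM_eq_norm] using frobenius_norm_mul A B

lemma frobM_transpose (M : Matrix a b ℝ) : frobM Mᵀ = frobM M := by
  simp only [frobM_eq_norm, frobenius_norm_transpose]

lemma frobM_kronecker (A : Matrix a b ℝ) (B : Matrix c e ℝ) :
    frobM (A ⊗ₖ B) = frobM A * frobM B := by
  have hsq : ∑ p, ∑ q, (A ⊗ₖ B) p q ^ 2 = (∑ i, ∑ j, A i j ^ 2) * ∑ k, ∑ l, B k l ^ 2 := by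
    simp only [kronecker_apply, Fintype.sum_prod_type, mul_pow, Finset.sum_mul_sum]
  rw [frobM, hsq]
  exact Real.sqrt_mul (Finset.sum_nonneg fun _ _ => Finset.sum_nonneg fun _ _ => sq_nonneg _) _

end Frobenius

section Flattening

variable {a b c : Type*}

def flattening (T : a → b → c → ℝ) : Matrix a (b × c) ℝ :=
  Matrix.of fun i p => T i p.1 p.2

lemma flattening_injective : Function.Injective (flattening : (a → b → c → ℝ) → _) :=
  fun _ _ h => funext fun i => funext fun j => funext fun k => congrFun (congrFun h i) (j, k)

lemma flattening_sub (T T' : a → b → c → ℝ) :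
    flattening (T - T') = flattening T - flattening T' := rfl

lemma frobM_flattening {d : ℕ} (T : Fin d → Fin d → Fin d → ℝ) :
    frobM (flattening T) = frobT T := by
  simp only [frobM, frobT, flattening, of_apply, Fintype.sum_prod_type]

end Flattening

section CongruenceAction

variable {m d e : ℕ}

lemma flattening_congrAct3 (C : Fin m → Fin m → Fin m → ℝ) (M : Matrix (Fin d) (Fin m) ℝ) :
    flattening (congrAct3 C M) = M * flattening C * (M ⊗ₖ M)ᵀ := by
  ext α ⟨β, γ⟩
  simp only [flattening, congrAct3, of_apply, mul_apply, Fintype.sum_prod_type, transpose_apply,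
    kronecker_apply, Finset.sum_mul]
  rw [Finset.sum_comm]
  refine Finset.sum_congr rfl fun j _ => ?_
  rw [Finset.sum_comm]
  exact Finset.sum_congr rfl fun k _ => Finset.sum_congr rfl fun i _ => by ring

lemma congrAct3_mul (C : Fin m → Fin m → Fin m → ℝ) (A : Matrix (Fin e) (Fin d) ℝ)
    (B : Matrix (Fin d) (Fin m) ℝ) : congrAct3 C (A * B) = congrAct3 (congrAct3 C B) A := by
  apply flattening_injective
  simp only [flattening_congrAct3, mul_kronecker_mul, transpose_mul, Matrix.mul_assoc]

lemma congrAct3_one (C : Fin m → Fin m → Fin m → ℝ) : congrAct3 C 1 = C := by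
  apply flattening_injective
  simp only [flattening_congrAct3, one_kronecker_one, transpose_one, Matrix.one_mul,
    Matrix.mul_one]

lemma congrAct3_sub (C C' : Fin m → Fin m → Fin m → ℝ) (P : Matrix (Fin d) (Fin m) ℝ) :
    congrAct3 (C - C') P = congrAct3 C P - congrAct3 C' P := by
  funext α β γ
  simp only [congrAct3, Pi.sub_apply, sub_mul, Finset.sum_sub_distrib]

lemma rank_flattening_congrAct3_le (C : Fin m → Fin m → Fin m → ℝ)
    (M : Matrix (Fin d) (Fin m) ℝ) : (flattening (congrAct3 C M)).rank ≤ M.rank := by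
  rw [flattening_congrAct3, Matrix.mul_assoc]
  exact rank_mul_le_left _ _

lemma frobT_congrAct3_le (T : Fin d → Fin d → Fin d → ℝ) (P : Matrix (Fin m) (Fin d) ℝ) :
    frobT (congrAct3 T P) ≤ frobM P ^ 3 * frobT T := by
  rw [← frobM_flattening, ← frobM_flattening, flattening_congrAct3]
  calc frobM (P * flattening T * (P ⊗ₖ P)ᵀ)
      ≤ frobM P * frobM (flattening T) * frobM (P ⊗ₖ P)ᵀ :=
        (frobM_mul_le _ _).trans (mul_le_mul_of_nonneg_right (frobM_mul_le _ _) (frobM_nonneg _))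
    _ = frobM P ^ 3 * frobM (flattening T) := by
        rw [frobM_transpose, frobM_kronecker]; ring

end CongruenceAction

section FullRank

variable {K : Type*} [Field K] {l n : Type*} [Fintype n] [DecidableEq n]

lemma isUnit_of_rank_eq_card (A : Matrix n n K) (hA : A.rank = Fintype.card n) : IsUnit A := by
  rw [← mulVec_surjective_iff_isUnit]
  have h : LinearMap.range A.mulVecLin = ⊤ :=
    Submodule.eq_top_of_finrank_eq (by rwa [Module.finrank_fintype_fun_eq_card])
  exact LinearMap.range_eq_top.mp h

variable [LinearOrder K] [IsStrictOrderedRing K] [Fintype l]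

lemma pinv_mul_self (X : Matrix l n K) (hX : X.rank = Fintype.card n) :
    (Xᵀ * X)⁻¹ * Xᵀ * X = 1 := by
  rw [Matrix.mul_assoc]
  refine nonsing_inv_mul _ ((isUnit_iff_isUnit_det _).mp (isUnit_of_rank_eq_card _ ?_))
  rw [rank_transpose_mul_self, hX]

lemma exists_mul_eq_one_of_rank_eq (A : Matrix n l K) (hA : A.rank = Fintype.card n) :
    ∃ R : Matrix l n K, A * R = 1 := by
  have h := congrArg transpose (pinv_mul_self Aᵀ (by rwa [rank_transpose]))
  rw [transpose_mul, transpose_transpose, transpose_one] at h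
  exact ⟨_, h⟩

end FullRank

section Identifiability

variable {m d : ℕ}

def HasTrivialStabilizer (C : Fin m → Fin m → Fin m → ℝ) : Prop :=
  ∀ Z : Matrix (Fin m) (Fin m) ℝ, IsUnit Z → congrAct3 C Z = C → Z = 1

lemma eq_of_congrAct3_eq_of_mul_eq_one {C C' : Fin m → Fin m → Fin m → ℝ}
    {L : Matrix (Fin m) (Fin d) ℝ} {Y : Matrix (Fin d) (Fin m) ℝ} (hLY : L * Y = 1)
    (h : congrAct3 C Y = congrAct3 C' Y) : C = C' := by
  rw [← congrAct3_one C, ← congrAct3_one C', ← hLY, congrAct3_mul, congrAct3_mul, h]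

theorem HasTrivialStabilizer.eq_of_congrAct3_eq {C : Fin m → Fin m → Fin m → ℝ}
    (htriv : HasTrivialStabilizer C) (hC : (flattening C).rank = m)
    {Y₁ Y₂ : Matrix (Fin d) (Fin m) ℝ} (hY₁ : Y₁.rank = m) (hY₂ : Y₂.rank = m)
    (h : congrAct3 C Y₁ = congrAct3 C Y₂) : Y₁ = Y₂ := by
  have hL₁ := pinv_mul_self Y₁ (by rwa [Fintype.card_fin])
  have hL₂ := pinv_mul_self Y₂ (by rwa [Fintype.card_fin])
  set L₂ := (Y₂ᵀ * Y₂)⁻¹ * Y₂ᵀ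
  obtain ⟨R, hR⟩ := exists_mul_eq_one_of_rank_eq (flattening C) (by rwa [Fintype.card_fin])
  have hS : Y₁ * (flattening C * (Y₁ ⊗ₖ Y₁)ᵀ) = Y₂ * (flattening C * (Y₂ ⊗ₖ Y₂)ᵀ) := by
    simpa only [flattening_congrAct3, Matrix.mul_assoc] using congrArg flattening h
  have hR₂ : flattening C * (Y₂ ⊗ₖ Y₂)ᵀ * ((L₂ ⊗ₖ L₂)ᵀ * R) = 1 := by
    rw [Matrix.mul_assoc, ← Matrix.mul_assoc (Y₂ ⊗ₖ Y₂)ᵀ, ← transpose_mul, ← mul_kronecker_mul,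
      hL₂, one_kronecker_one, transpose_one, Matrix.one_mul, hR]
  set Z := flattening C * (Y₁ ⊗ₖ Y₁)ᵀ * ((L₂ ⊗ₖ L₂)ᵀ * R)
  have hYZ : Y₁ * Z = Y₂ := by
    rw [← Matrix.mul_assoc, hS, Matrix.mul_assoc, hR₂, Matrix.mul_one]
  have hZ : IsUnit Z := (isUnit_iff_isUnit_det Z).mpr <|
    isUnit_det_of_left_inverse (B := L₂ * Y₁) (by rw [Matrix.mul_assoc, hYZ, hL₂])
  have hstab : congrAct3 C Z = C :=
    eq_of_congrAct3_eq_of_mul_eq_one hL₁ (by rw [← congrAct3_mul, hYZ, h])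
  rw [← hYZ, htriv Z hZ hstab, Matrix.mul_one]

end Identifiability

section Approximation

variable {m d : ℕ}

lemma exists_low_rank_approx_of_rank_lt {P : Matrix (Fin m) (Fin d) ℝ}
    {X Y : Matrix (Fin d) (Fin m) ℝ} (hPX : P * X = 1) (hY : Y.rank < m)
    (C : Fin m → Fin m → Fin m → ℝ) :
    ∃ A : Matrix (Fin m) (Fin m × Fin m) ℝ, A.rank < m ∧
      frobM (flattening C - A) ≤ frobM P ^ 3 * frobT (congrAct3 C X - congrAct3 C Y) := by
  refine ⟨flattening (congrAct3 C (P * Y)), ?_, ?_⟩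
  · exact (rank_flattening_congrAct3_le C _).trans_lt ((rank_mul_le_right P Y).trans_lt hY)
  · have hdiff : C - congrAct3 C (P * Y) = congrAct3 (congrAct3 C X - congrAct3 C Y) P := by
      rw [congrAct3_sub, ← congrAct3_mul, ← congrAct3_mul, hPX, congrAct3_one]
    rw [← flattening_sub, hdiff, frobM_flattening]
    exact frobT_congrAct3_le _ P

theorem HasTrivialStabilizer.exists_low_rank_approx_flattening
    {C : Fin m → Fin m → Fin m → ℝ} (htriv : HasTrivialStabilizer C)
    {X : Matrix (Fin d) (Fin m) ℝ} (hX : X.rank = m) {Y₁ Y₂ : Matrix (Fin d) (Fin m) ℝ}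
    (hne : Y₁ ≠ Y₂) (h : congrAct3 C Y₁ = congrAct3 C Y₂) :
    ∃ A : Matrix (Fin m) (Fin m × Fin m) ℝ, A.rank < m ∧
      frobM (flattening C - A) ≤
        frobM ((Xᵀ * X)⁻¹ * Xᵀ) ^ 3 * frobT (congrAct3 C X - congrAct3 C Y₁) := by
  have hPX := pinv_mul_self X (by rwa [Fintype.card_fin])
  by_cases hC : (flattening C).rank < m
  · refine ⟨flattening C, hC, ?_⟩
    rw [sub_self, frobM_zero]
    exact mul_nonneg (pow_nonneg (frobM_nonneg _) 3) (Real.sqrt_nonneg _)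
  by_cases h₁ : Y₁.rank < m
  · exact exists_low_rank_approx_of_rank_lt hPX h₁ C
  by_cases h₂ : Y₂.rank < m
  · rw [h]
    exact exists_low_rank_approx_of_rank_lt hPX h₂ C
  refine absurd (htriv.eq_of_congrAct3_eq ?_ ?_ ?_ h) hne
  · exact ((rank_le_card_height _).trans_eq (Fintype.card_fin m)).antisymm (not_lt.mp hC)
  · exact (rank_le_width Y₁).antisymm (not_lt.mp h₁)
  · exact (rank_le_width Y₂).antisymm (not_lt.mp h₂)

end Approximation

section ModePermutations

variable {a b c : Type*}

def swapModes (T : a → b → c → ℝ) : b → a → c → ℝ := fun j i k => T i j k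

def rotateModes (T : a → b → c → ℝ) : c → a → b → ℝ := fun k i j => T i j k

lemma swapModes_injective : Function.Injective (swapModes : (a → b → c → ℝ) → _) :=
  fun _ _ h => funext fun i => funext fun j => congrFun (congrFun h j) i

lemma rotateModes_injective : Function.Injective (rotateModes : (a → b → c → ℝ) → _) :=
  fun _ _ h => funext fun i => funext fun j => funext fun k =>
    congrFun (congrFun (congrFun h k) i) j

lemma swapModes_sub (T T' : a → b → c → ℝ) :
    swapModes (T - T') = swapModes T - swapModes T' := rfl

lemma rotateModes_sub (T T' : a → b → c → ℝ) :
    rotateModes (T - T') = rotateModes T - rotateModes T' := rfl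

variable {m d : ℕ}

lemma congrAct3_swapModes (C : Fin m → Fin m → Fin m → ℝ) (Z : Matrix (Fin d) (Fin m) ℝ) :
    congrAct3 (swapModes C) Z = swapModes (congrAct3 C Z) := by
  funext β α γ
  simp only [congrAct3, swapModes]
  rw [Finset.sum_comm]
  exact Finset.sum_congr rfl fun i _ => Finset.sum_congr rfl fun j _ =>
    Finset.sum_congr rfl fun k _ => by ring

lemma congrAct3_rotateModes (C : Fin m → Fin m → Fin m → ℝ) (Z : Matrix (Fin d) (Fin m) ℝ) :
    congrAct3 (rotateModes C) Z = rotateModes (congrAct3 C Z) := by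
  funext γ α β
  simp only [congrAct3, rotateModes]
  rw [Finset.sum_comm]
  refine Finset.sum_congr rfl fun i _ => ?_
  rw [Finset.sum_comm]
  exact Finset.sum_congr rfl fun j _ => Finset.sum_congr rfl fun k _ => by ring

lemma frobT_swapModes (T : Fin d → Fin d → Fin d → ℝ) : frobT (swapModes T) = frobT T := by
  rw [frobT, frobT, Finset.sum_comm]
  rfl

lemma frobT_rotateModes (T : Fin d → Fin d → Fin d → ℝ) : frobT (rotateModes T) = frobT T := by
  rw [frobT, frobT, Finset.sum_comm]
  exact congrArg Real.sqrt (Finset.sum_congr rfl fun i _ => Finset.sum_comm)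

lemma HasTrivialStabilizer.swapModes {C : Fin m → Fin m → Fin m → ℝ}
    (htriv : HasTrivialStabilizer C) : HasTrivialStabilizer (swapModes C) := fun Z hZ hZC =>
  htriv Z hZ (swapModes_injective (by rw [← congrAct3_swapModes, hZC]))

lemma HasTrivialStabilizer.rotateModes {C : Fin m → Fin m → Fin m → ℝ}
    (htriv : HasTrivialStabilizer C) : HasTrivialStabilizer (rotateModes C) := fun Z hZ hZC =>
  htriv Z hZ (rotateModes_injective (by rw [← congrAct3_rotateModes, hZC]))

end ModePermutations

/-- If `C` has trivial real stabilizer, `X ∈ ℝ^{d×m}` has rank `m` with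
pseudo-inverse `X⁺ = (XᵀX)⁻¹Xᵀ`, and `S` is a non-identifiable signature tensor,
then each flattening of `C` is within Frobenius distance
`‖X⁺‖³ · ‖[[C;X,X,X]] − S‖` of a matrix of rank less than `m`. -/
theorem flattening_close_to_low_rank_of_nonidentifiable (m d : ℕ)
    (C : Fin m → Fin m → Fin m → ℝ)
    (htriv : ∀ Z : Matrix (Fin m) (Fin m) ℝ, IsUnit Z → congrAct3 C Z = C → Z = 1)
    (X : Matrix (Fin d) (Fin m) ℝ) (hX : X.rank = m)
    (S : Fin d → Fin d → Fin d → ℝ) (Y₁ Y₂ : Matrix (Fin d) (Fin m) ℝ)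
    (hne : Y₁ ≠ Y₂) (hY₁ : congrAct3 C Y₁ = S) (hY₂ : congrAct3 C Y₂ = S) :
    (∃ A : Matrix (Fin m) (Fin m × Fin m) ℝ, A.rank < m ∧
      frobM (Matrix.of (fun (i : Fin m) (p : Fin m × Fin m) => C i p.1 p.2) - A)
        ≤ frobM ((Xᵀ * X)⁻¹ * Xᵀ) ^ 3 * frobT (congrAct3 C X - S)) ∧
    (∃ A : Matrix (Fin m) (Fin m × Fin m) ℝ, A.rank < m ∧
      frobM (Matrix.of (fun (j : Fin m) (p : Fin m × Fin m) => C p.1 j p.2) - A)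
        ≤ frobM ((Xᵀ * X)⁻¹ * Xᵀ) ^ 3 * frobT (congrAct3 C X - S)) ∧
    (∃ A : Matrix (Fin m) (Fin m × Fin m) ℝ, A.rank < m ∧
      frobM (Matrix.of (fun (k : Fin m) (p : Fin m × Fin m) => C p.1 p.2 k) - A)
        ≤ frobM ((Xᵀ * X)⁻¹ * Xᵀ) ^ 3 * frobT (congrAct3 C X - S)) := by
  subst hY₁
  have hY := hY₂.symm
  have hstab : HasTrivialStabilizer C := htriv
  refine ⟨hstab.exists_low_rank_approx_flattening hX hne hY, ?_, ?_⟩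
  · have h₂ := hstab.swapModes.exists_low_rank_approx_flattening hX hne
      (by rw [congrAct3_swapModes, congrAct3_swapModes, hY])
    rwa [congrAct3_swapModes, congrAct3_swapModes, ← swapModes_sub, frobT_swapModes] at h₂
  · have h₃ := hstab.rotateModes.exists_low_rank_approx_flattening hX hne
      (by rw [congrAct3_rotateModes, congrAct3_rotateModes, hY])
    rwa [congrAct3_rotateModes, congrAct3_rotateModes, ← rotateModes_sub, frobT_rotateModes] at h₃
end
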